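/- arXiv:2504.17861 — 3 statements merged into one kernel-verified Lean document; each statement's English description precedes it below -/
import Mathlib

section
/- Let C ∈ ℝ^{n×n×n₃} be T-symmetric positive definite and D ∈ ℝ^{n×l×n₃}, and set f(Y) = (1/2) Yᵀ⋆C⋆Y − Yᵀ⋆D for Y ∈ ℝ^{n×l×n₃}. Then X ∈ ℝ^{n×l×n₃} satisfies C⋆X = D if and only if Tr((f(X))^{(1)}) = min over all Y ∈ ℝ^{n×l×n₃} of Tr((f(Y))^{(1)}). -/
open Matrix Filter Topology

noncomputable section

/-- A third-order real tensor of size `n₁ × n₂ × n₃`, identified with the family of its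
frontal slices indexed by `ZMod n₃`. -/
abbrev Tensor (n₁ n₂ n₃ : ℕ) := ZMod n₃ → Matrix (Fin n₁) (Fin n₂) ℝ

/-- The T-product of third-order tensors: `(C ⋆ D)(k) = ∑ j, C (k - j) * D j`. -/
def tProd {n₁ n₂ l n₃ : ℕ} [NeZero n₃] (C : Tensor n₁ n₂ n₃) (D : Tensor n₂ l n₃) :
    Tensor n₁ l n₃ :=
  fun k => ∑ j : ZMod n₃, C (k - j) * D j

/-- The tensor transpose: `(Cᵀ)(k) = (C (-k))ᵀ`. -/
def tTrans {n₁ n₂ n₃ : ℕ} (C : Tensor n₁ n₂ n₃) : Tensor n₂ n₁ n₃ :=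
  fun k => (C (-k))ᵀ

/-- The matrix trace of the first frontal slice of a tensor with square slices. -/
def trFirst {m n₃ : ℕ} (S : Tensor m m n₃) : ℝ :=
  (S 0).trace

/-- The inner product `⟨C, D⟩ = ∑ k i j, C k i j * D k i j`. -/
def tInner {n₁ n₂ n₃ : ℕ} [NeZero n₃] (C D : Tensor n₁ n₂ n₃) : ℝ :=
  ∑ k : ZMod n₃, ∑ i : Fin n₁, ∑ j : Fin n₂, C k i j * D k i j

/-- The Frobenius norm `‖C‖ = √⟨C, C⟩`. -/
def tNorm {n₁ n₂ n₃ : ℕ} [NeZero n₃] (C : Tensor n₁ n₂ n₃) : ℝ :=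
  Real.sqrt (tInner C C)

/-- The block circulant matrix of a tensor: its `(k, l)` block is `C (k - l)`. -/
def bCirc {n n₃ : ℕ} [NeZero n₃] (C : Tensor n n n₃) :
    Matrix (ZMod n₃ × Fin n) (ZMod n₃ × Fin n) ℝ :=
  fun p q => C (p.1 - q.1) p.2 q.2

/-- `C` is T-symmetric positive definite: `Cᵀ = C` and `bCirc C` is positive definite. -/
def TSymPD {n n₃ : ℕ} [NeZero n₃] (C : Tensor n n n₃) : Prop :=
  tTrans C = C ∧ (bCirc C).PosDef

/-!
Stacking the frontal slices of a tensor `Y` into one matrix `tUnfold Y` turns `C ⋆ Y` into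
`bcirc(C) · tUnfold Y` and `Tr((Yᵀ ⋆ Z)^{(1)})` into `Tr((tUnfold Y)ᵀ · tUnfold Z)`, so the claim
becomes the variational characterization of `M X = B` for positive semidefinite `M`. The energy
`E(Y) = Tr(Yᵀ M Y) / 2 - Tr(Yᵀ B)` satisfies `E(X + V) = E(X) + ⟪V, M X - B⟫ + ⟪V, M V⟫ / 2`:
if `M X = B` every increment is nonnegative; conversely, with `W = M X - B`, minimality along
the line `X + t • W` makes `t ↦ ‖W‖² t + ⟪W, M W⟫ t² / 2` nonnegative, so its discriminant `‖W‖⁴`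
vanishes.
-/

namespace Matrix

variable {m p : Type*} [Fintype m] [Fintype p]

def traceEnergy (M : Matrix m m ℝ) (B Y : Matrix m p ℝ) : ℝ :=
  (Yᵀ * M * Y).trace / 2 - (Yᵀ * B).trace

lemma traceEnergy_add {M : Matrix m m ℝ} (hM : M.IsSymm) (B X V : Matrix m p ℝ) :
    traceEnergy M B (X + V) =
      traceEnergy M B X + (Vᵀ * (M * X - B)).trace + (Vᵀ * M * V).trace / 2 := by
  have hcross : (Xᵀ * (M * V)).trace = (Vᵀ * (M * X)).trace := by
    rw [← trace_transpose, transpose_mul, transpose_mul, transpose_transpose, hM.eq,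
      Matrix.mul_assoc]
  simp only [traceEnergy, transpose_add, Matrix.add_mul, Matrix.mul_add, Matrix.mul_sub,
    trace_add, trace_sub, Matrix.mul_assoc]
  rw [hcross]
  ring

lemma PosSemidef.mul_eq_iff_forall_traceEnergy_le {M : Matrix m m ℝ} (hM : M.PosSemidef)
    (B X : Matrix m p ℝ) :
    M * X = B ↔ ∀ Y, traceEnergy M B X ≤ traceEnergy M B Y := by
  have hsymm : M.IsSymm := isHermitian_iff_isSymm.mp hM.1
  have hquad_nonneg (V : Matrix m p ℝ) : 0 ≤ (Vᵀ * M * V).trace := by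
    simpa using (hM.conjTranspose_mul_mul_same V).trace_nonneg
  constructor
  · intro hX Y
    have hexpand := traceEnergy_add hsymm B X (Y - X)
    rw [add_sub_cancel, hX, sub_self, Matrix.mul_zero, trace_zero] at hexpand
    linarith [hquad_nonneg (Y - X)]
  · intro hmin
    set W := M * X - B with hW
    have hline (t : ℝ) :
        0 ≤ (Wᵀ * M * W).trace / 2 * (t * t) + (Wᵀ * W).trace * t + 0 := by
      have hmin_t := hmin (X + t • W)
      rw [traceEnergy_add hsymm, ← hW] at hmin_t
      simp only [transpose_smul, smul_mul, Matrix.mul_smul, trace_smul, smul_eq_mul] at hmin_t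
      linarith
    have hdiscrim := discrim_le_zero hline
    rw [discrim, mul_zero, sub_zero] at hdiscrim
    have hnorm : (Wᴴ * W).trace = 0 := by
      rw [conjTranspose_eq_transpose_of_trivial]
      exact pow_eq_zero_iff two_ne_zero |>.mp (le_antisymm hdiscrim (sq_nonneg _))
    exact sub_eq_zero.mp (trace_conjTranspose_mul_self_eq_zero_iff.mp hnorm)

end Matrix

def tUnfold {n₁ n₂ n₃ : ℕ} : Tensor n₁ n₂ n₃ ≃ Matrix (ZMod n₃ × Fin n₁) (Fin n₂) ℝ where
  toFun Y := Matrix.of fun p j => Y p.1 p.2 j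
  invFun U k := Matrix.of fun i j => U (k, i) j
  left_inv _ := rfl
  right_inv _ := rfl

@[simp]
lemma tUnfold_apply {n₁ n₂ n₃ : ℕ} (Y : Tensor n₁ n₂ n₃) (k : ZMod n₃) (i : Fin n₁)
    (j : Fin n₂) : tUnfold Y (k, i) j = Y k i j :=
  rfl

lemma tUnfold_tProd {n l n₃ : ℕ} [NeZero n₃] (C : Tensor n n n₃) (Y : Tensor n l n₃) :
    tUnfold (tProd C Y) = bCirc C * tUnfold Y := by
  ext ⟨k, i⟩ c
  simp [tProd, bCirc, mul_apply, Matrix.sum_apply, Fintype.sum_prod_type]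

lemma trFirst_tProd_tTrans {n₁ n₂ n₃ : ℕ} [NeZero n₃] (Y Z : Tensor n₁ n₂ n₃) :
    trFirst (tProd (tTrans Y) Z) = ((tUnfold Y)ᵀ * tUnfold Z).trace := by
  simp only [trFirst, tProd, tTrans, trace, diag, Matrix.sum_apply, mul_apply, transpose_apply,
    zero_sub, neg_neg, Fintype.sum_prod_type, tUnfold_apply]

theorem stmt_3 (n l n₃ : ℕ) [NeZero n₃] (C : Tensor n n n₃) (hC : TSymPD C)
    (D X : Tensor n l n₃)
    (f : Tensor n l n₃ → Tensor l l n₃)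
    (hf : ∀ Y, f Y = (1 / 2 : ℝ) • tProd (tTrans Y) (tProd C Y) - tProd (tTrans Y) D) :
    tProd C X = D ↔ ∀ Y : Tensor n l n₃, trFirst (f X) ≤ trFirst (f Y) := by
  have henergy (Y : Tensor n l n₃) :
      trFirst (f Y) = (bCirc C).traceEnergy (tUnfold D) (tUnfold Y) := by
    rw [hf, trFirst, Pi.sub_apply, Pi.smul_apply, trace_sub, trace_smul, ← trFirst, ← trFirst,
      trFirst_tProd_tTrans, trFirst_tProd_tTrans, tUnfold_tProd, Matrix.traceEnergy,
      Matrix.mul_assoc, smul_eq_mul]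
    ring
  simp only [henergy]
  rw [← tUnfold.injective.eq_iff, tUnfold_tProd,
    hC.2.posSemidef.mul_eq_iff_forall_traceEnergy_le]
  exact tUnfold.forall_congr_right.symm
end
end

section
/- Let C ∈ ℝ^{n×n×n₃} be T-symmetric positive definite, D ∈ ℝ^{n×l×n₃}, and let X_k, R_k, P_k be the iterates of Algorithm 1 from an arbitrary initial tensor X₁ ∈ ℝ^{n×l×n₃}. If P₁,…,P_{k−1} are all nonzero (so that the iterates up to index k are defined), then Tr((P_kᵀ⋆R_k)^{(1)}) = Tr((R_kᵀ⋆R_k)^{(1)}) = ‖R_k‖². -/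
open Matrix Filter Topology

noncomputable section

/-!
The trace of the first frontal slice of `Aᵀ ⋆ B` is the Frobenius inner product `⟨A, B⟩`, so the
claim reads `⟨P_k, R_k⟩ = ⟨R_k, R_k⟩ = ‖R_k‖²`. The step length `t_k` is the exact line search
along `P_k`: from `R_{k+1} = R_k - t_k C⋆P_k` one gets `⟨P_k, R_{k+1}⟩ = 0`, which is meaningful
because positive definiteness of `bcirc C` makes `⟨P_k, C⋆P_k⟩ > 0` unless `P_k = 0`. Pairing
`P_{k+1} = R_{k+1} - β_k P_k` with `R_{k+1}` then gives `⟨P_{k+1}, R_{k+1}⟩ = ⟨R_{k+1}, R_{k+1}⟩`.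
-/

section TensorAlgebra

variable {n₁ n₂ l n₃ : ℕ} [NeZero n₃]

lemma trFirst_tProd_tTrans_s6 (A B : Tensor n₁ n₂ n₃) :
    trFirst (tProd (tTrans A) B) = tInner A B := by
  unfold trFirst tProd tTrans tInner
  rw [Matrix.trace_sum]
  refine Finset.sum_congr rfl fun j _ => ?_
  simp only [zero_sub, neg_neg, Matrix.trace, Matrix.diag_apply, Matrix.mul_apply,
    Matrix.transpose_apply]
  exact Finset.sum_comm

lemma tNorm_sq (A : Tensor n₁ n₂ n₃) : tNorm A ^ 2 = tInner A A :=
  Real.sq_sqrt <| Finset.sum_nonneg fun _ _ => Finset.sum_nonneg fun _ _ =>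
    Finset.sum_nonneg fun _ _ => mul_self_nonneg _

lemma tProd_add (C : Tensor n₁ n₂ n₃) (A B : Tensor n₂ l n₃) :
    tProd C (A + B) = tProd C A + tProd C B := by
  funext k
  simp [tProd, Matrix.mul_add, Finset.sum_add_distrib]

lemma tProd_smul (C : Tensor n₁ n₂ n₃) (c : ℝ) (A : Tensor n₂ l n₃) :
    tProd C (c • A) = c • tProd C A := by
  funext k
  simp [tProd, Matrix.mul_smul, Finset.smul_sum]

lemma tInner_zero_left (B : Tensor n₁ n₂ n₃) : tInner 0 B = 0 := by
  simp [tInner]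

lemma tInner_sub_left (A A' B : Tensor n₁ n₂ n₃) :
    tInner (A - A') B = tInner A B - tInner A' B := by
  simp [tInner, sub_mul, Finset.sum_sub_distrib]

lemma tInner_sub_right (A B B' : Tensor n₁ n₂ n₃) :
    tInner A (B - B') = tInner A B - tInner A B' := by
  simp [tInner, mul_sub, Finset.sum_sub_distrib]

lemma tInner_smul_left (c : ℝ) (A B : Tensor n₁ n₂ n₃) :
    tInner (c • A) B = c * tInner A B := by
  simp [tInner, Finset.mul_sum, mul_assoc]

lemma tInner_smul_right (A : Tensor n₁ n₂ n₃) (c : ℝ) (B : Tensor n₁ n₂ n₃) :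
    tInner A (c • B) = c * tInner A B := by
  simp [tInner, Finset.mul_sum, mul_left_comm]

end TensorAlgebra

section BlockCirculant

variable {n l n₃ : ℕ} [NeZero n₃]

/-- The `j`-th lateral slice of `A`, stacked into a vector indexed like the rows of `bCirc`. -/
def colVec (A : Tensor n l n₃) (j : Fin l) : ZMod n₃ × Fin n → ℝ :=
  fun p => A p.1 p.2 j

lemma tInner_eq_sum_dotProduct_colVec (A B : Tensor n l n₃) :
    tInner A B = ∑ j, colVec A j ⬝ᵥ colVec B j := by
  simp only [tInner, colVec, dotProduct, Fintype.sum_prod_type]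
  rw [Finset.sum_comm (γ := Fin l)]
  exact Finset.sum_congr rfl fun _ _ => Finset.sum_comm

lemma colVec_tProd (C : Tensor n n n₃) (B : Tensor n l n₃) (j : Fin l) :
    colVec (tProd C B) j = bCirc C *ᵥ colVec B j := by
  funext p
  simp [colVec, tProd, bCirc, Matrix.mulVec, dotProduct, Fintype.sum_prod_type,
    Matrix.sum_apply, Matrix.mul_apply]

lemma tInner_tProd_self_pos {C : Tensor n n n₃} (hC : (bCirc C).PosDef) {P : Tensor n l n₃}
    (hP : P ≠ 0) : 0 < tInner P (tProd C P) := by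
  simp only [tInner_eq_sum_dotProduct_colVec, colVec_tProd]
  obtain ⟨j₀, hj₀⟩ : ∃ j, colVec P j ≠ 0 := by
    by_contra! h
    exact hP (funext fun k => Matrix.ext fun i j => congrFun (h j) (k, i))
  exact Finset.sum_pos' (fun j _ => hC.posSemidef.dotProduct_mulVec_nonneg _)
    ⟨j₀, Finset.mem_univ _, hC.dotProduct_mulVec_pos hj₀⟩

/-- The step `⟨P, R⟩ / ⟨P, C⋆P⟩` is the exact line search along `P`; for `P = 0` it takes the junk
value `0`, which is harmless. -/
lemma tInner_sub_lineSearch_eq_zero {C : Tensor n n n₃} (hC : (bCirc C).PosDef)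
    (P R : Tensor n l n₃) :
    tInner P (R - (tInner P R / tInner P (tProd C P)) • tProd C P) = 0 := by
  rcases eq_or_ne P 0 with rfl | hP
  · exact tInner_zero_left _
  · rw [tInner_sub_right, tInner_smul_right,
      div_mul_cancel₀ _ (tInner_tProd_self_pos hC hP).ne', sub_self]

end BlockCirculant

theorem stmt_6_general (n l n₃ : ℕ) [NeZero n₃] (C : Tensor n n n₃) (hC : TSymPD C)
    (D : Tensor n l n₃)
    (X R P : ℕ → Tensor n l n₃)
    (hR : ∀ i, 1 ≤ i → R i = D - tProd C (X i))
    (hP1 : P 1 = R 1)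
    (hX : ∀ i, 1 ≤ i → X (i + 1) = X i +
      (trFirst (tProd (tTrans (P i)) (R i)) /
        trFirst (tProd (tTrans (P i)) (tProd C (P i)))) • P i)
    (hP : ∀ i, 1 ≤ i → P (i + 1) = R (i + 1) -
      (trFirst (tProd (tTrans (P i)) (tProd C (R (i + 1)))) /
        trFirst (tProd (tTrans (P i)) (tProd C (P i)))) • P i)
    (k : ℕ) (hk : 1 ≤ k) :
    trFirst (tProd (tTrans (P k)) (R k)) = trFirst (tProd (tTrans (R k)) (R k)) ∧
    trFirst (tProd (tTrans (R k)) (R k)) = tNorm (R k) ^ 2 := by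
  simp only [trFirst_tProd_tTrans_s6] at hX hP ⊢
  refine ⟨?_, (tNorm_sq _).symm⟩
  obtain rfl | ⟨m, hm, rfl⟩ : k = 1 ∨ ∃ m, 1 ≤ m ∧ k = m + 1 :=
    (eq_or_lt_of_le hk).imp Eq.symm fun h => ⟨k - 1, by omega, by omega⟩
  · rw [hP1]
  have hR_succ : R (m + 1) = R m -
      (tInner (P m) (R m) / tInner (P m) (tProd C (P m))) • tProd C (P m) := by
    rw [hR (m + 1) (by omega), hX m hm, tProd_add, tProd_smul, hR m hm]
    abel
  have h_orth : tInner (P m) (R (m + 1)) = 0 := by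
    rw [hR_succ]
    exact tInner_sub_lineSearch_eq_zero hC.2 _ _
  rw [hP m hm, tInner_sub_left, tInner_smul_left, h_orth, mul_zero, sub_zero]

theorem stmt_6 (n l n₃ : ℕ) [NeZero n₃] (C : Tensor n n n₃) (hC : TSymPD C)
    (D : Tensor n l n₃)
    (X R P : ℕ → Tensor n l n₃)
    (hR : ∀ i, 1 ≤ i → R i = D - tProd C (X i))
    (hP1 : P 1 = R 1)
    (hX : ∀ i, 1 ≤ i → X (i + 1) = X i +
      (trFirst (tProd (tTrans (P i)) (R i)) /
        trFirst (tProd (tTrans (P i)) (tProd C (P i)))) • P i)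
    (hP : ∀ i, 1 ≤ i → P (i + 1) = R (i + 1) -
      (trFirst (tProd (tTrans (P i)) (tProd C (R (i + 1)))) /
        trFirst (tProd (tTrans (P i)) (tProd C (P i)))) • P i)
    (k : ℕ) (hk : 1 ≤ k) (hPne : ∀ i, 1 ≤ i → i < k → P i ≠ 0) :
    trFirst (tProd (tTrans (P k)) (R k)) = trFirst (tProd (tTrans (R k)) (R k)) ∧
    trFirst (tProd (tTrans (R k)) (R k)) = tNorm (R k) ^ 2 :=
  stmt_6_general n l n₃ C hC D X R P hR hP1 hX hP k hk
end
end

section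
/- Let C ∈ ℝ^{n₁×n₂×n₃} and D ∈ ℝ^{n₁×l×n₃}, and suppose the equation C⋆X = D is consistent. If X̃ ∈ ℝ^{n₂×l×n₃} is a solution of C⋆X = D of the form X̃ = Cᵀ⋆Y for some Y ∈ ℝ^{n₁×l×n₃}, then X̃ has minimal Frobenius norm among all solutions: ‖X̃‖ ≤ ‖X‖ for every X with C⋆X = D, with equality if and only if X = X̃. -/
open Matrix Filter Topology

noncomputable section

lemma tInner_self_nonneg' {n₁ n₂ n₃ : ℕ} [NeZero n₃] (C : Tensor n₁ n₂ n₃) :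
    0 ≤ tInner C C := by
  apply Finset.sum_nonneg; intro k _
  apply Finset.sum_nonneg; intro i _
  apply Finset.sum_nonneg; intro j _
  exact mul_self_nonneg _

lemma tInner_self_eq_zero' {n₁ n₂ n₃ : ℕ} [NeZero n₃] (C : Tensor n₁ n₂ n₃) :
    tInner C C = 0 ↔ C = 0 := by
  constructor
  · intro h
    funext k
    ext i j
    have h1 : ∀ k ∈ Finset.univ, (0:ℝ) ≤ ∑ i : Fin n₁, ∑ j : Fin n₂, C k i j * C k i j := by
      intro k _
      apply Finset.sum_nonneg; intro i _
      apply Finset.sum_nonneg; intro j _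
      exact mul_self_nonneg _
    have h2 := (Finset.sum_eq_zero_iff_of_nonneg h1).mp h k (Finset.mem_univ k)
    have h3 : ∀ i ∈ Finset.univ, (0:ℝ) ≤ ∑ j : Fin n₂, C k i j * C k i j := by
      intro i _
      apply Finset.sum_nonneg; intro j _
      exact mul_self_nonneg _
    have h4 := (Finset.sum_eq_zero_iff_of_nonneg h3).mp h2 i (Finset.mem_univ i)
    have h5 : ∀ j ∈ Finset.univ, (0:ℝ) ≤ C k i j * C k i j := by
      intro j _; exact mul_self_nonneg _
    have h6 := (Finset.sum_eq_zero_iff_of_nonneg h5).mp h4 j (Finset.mem_univ j)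
    simpa using mul_self_eq_zero.mp h6
  · rintro rfl; simp [tInner]

lemma tInner_add_left' {n₁ n₂ n₃ : ℕ} [NeZero n₃] (A B C : Tensor n₁ n₂ n₃) :
    tInner (A + B) C = tInner A C + tInner B C := by
  simp [tInner, Matrix.add_apply, add_mul, Finset.sum_add_distrib]

lemma tInner_add_right' {n₁ n₂ n₃ : ℕ} [NeZero n₃] (A B C : Tensor n₁ n₂ n₃) :
    tInner A (B + C) = tInner A B + tInner A C := by
  simp [tInner, Matrix.add_apply, mul_add, Finset.sum_add_distrib]

lemma tInner_comm' {n₁ n₂ n₃ : ℕ} [NeZero n₃] (A B : Tensor n₁ n₂ n₃) :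
    tInner A B = tInner B A := by
  simp [tInner, mul_comm]

lemma tInner_zero_right' {n₁ n₂ n₃ : ℕ} [NeZero n₃] (B : Tensor n₁ n₂ n₃) :
    tInner B 0 = 0 := by
  simp [tInner]

lemma tProd_sub' {n₁ n₂ l n₃ : ℕ} [NeZero n₃] (C : Tensor n₁ n₂ n₃) (X X' : Tensor n₂ l n₃) :
    tProd C (X - X') = tProd C X - tProd C X' := by
  funext k
  simp [tProd, Matrix.mul_sub, Finset.sum_sub_distrib]

lemma adjoint' {n₁ n₂ l n₃ : ℕ} [NeZero n₃] (C : Tensor n₁ n₂ n₃)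
    (Y : Tensor n₁ l n₃) (Z : Tensor n₂ l n₃) :
    tInner (tProd (tTrans C) Y) Z = tInner Y (tProd C Z) := by
  simp only [tInner, tProd, tTrans, Matrix.sum_apply, Matrix.mul_apply,
    Matrix.transpose_apply, Finset.sum_mul, Finset.mul_sum, neg_sub]
  conv_lhs => enter [2, k, 2, i']; rw [Finset.sum_comm]
  conv_lhs => enter [2, k]; rw [Finset.sum_comm]
  conv_lhs => rw [Finset.sum_comm]
  conv_lhs => enter [2, m, 2, k, 2, i']; rw [Finset.sum_comm]
  conv_lhs => enter [2, m, 2, k]; rw [Finset.sum_comm]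
  conv_lhs => enter [2, m]; rw [Finset.sum_comm]
  conv_lhs => enter [2, m, 2, i, 2, k]; rw [Finset.sum_comm]
  conv_lhs => enter [2, m, 2, i]; rw [Finset.sum_comm]
  apply Finset.sum_congr rfl; intro m _
  apply Finset.sum_congr rfl; intro i _
  apply Finset.sum_congr rfl; intro j _
  apply Finset.sum_congr rfl; intro k _
  apply Finset.sum_congr rfl; intro i' _
  ring

theorem stmt_13 (n₁ n₂ l n₃ : ℕ) [NeZero n₃] (C : Tensor n₁ n₂ n₃)
    (D : Tensor n₁ l n₃) (Xt : Tensor n₂ l n₃) (hXt : tProd C Xt = D)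
    (Y : Tensor n₁ l n₃) (hform : Xt = tProd (tTrans C) Y) :
    ∀ X : Tensor n₂ l n₃, tProd C X = D →
      tNorm Xt ≤ tNorm X ∧ (tNorm Xt = tNorm X ↔ X = Xt) := by
  intro X hX
  set Z := X - Xt with hZ
  have hXZ : X = Xt + Z := by simp [hZ]
  have hCZ : tProd C Z = 0 := by
    rw [hZ, tProd_sub', hX, hXt, sub_self]
  have horth : tInner Xt Z = 0 := by
    rw [hform, adjoint', hCZ, tInner_zero_right']
  have hexp : tInner X X = tInner Xt Xt + tInner Z Z := by
    rw [hXZ, tInner_add_left', tInner_add_right', tInner_add_right',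
      tInner_comm' Z Xt, horth]
    ring
  have hle : tInner Xt Xt ≤ tInner X X := by
    rw [hexp]; linarith [tInner_self_nonneg' Z]
  refine ⟨Real.sqrt_le_sqrt hle, ?_, ?_⟩
  · intro h
    have h2 : tInner Xt Xt = tInner X X :=
      (Real.sqrt_inj (tInner_self_nonneg' Xt) (tInner_self_nonneg' X)).mp h
    have hZ0 : tInner Z Z = 0 := by linarith [hexp]
    have : Z = 0 := (tInner_self_eq_zero' Z).mp hZ0
    have := sub_eq_zero.mp (hZ ▸ this)
    exact this
  · intro h; rw [h]
end
end
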